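/- Let P be a hereditary graph property. Then: (i) F_⊆(P) is finite if and only if F_≤(P) is finite; and (ii) the following are equivalent: F_⊆(P) = F_≤(P); F_≤(P) is a ⊆-antichain; for each n ∈ ℕ, the set F_≤(P,n) of graphs in F_≤(P) with exactly n vertices is a ⊆-antichain. -/

import Mathlib

attribute [local instance] Classical.propDecidable

open SimpleGraph

/-- A finite simple graph, bundled. -/
structure FGraph : Type 1 where
  V : Type
  [fin : Fintype V]
  graph : SimpleGraph V

attribute [instance] FGraph.fin

namespace FGraph

/-- `G.IsInduced H` : `G` is isomorphic to an induced subgraph of `H`. -/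
def IsInduced (G H : FGraph) : Prop := Nonempty (G.graph ↪g H.graph)

/-- `G.IsSub H` : `G` is isomorphic to a subgraph of `H`. -/
def IsSub (G H : FGraph) : Prop := ∃ f : G.graph →g H.graph, Function.Injective f

/-- `G.Iso H` : `G` and `H` are isomorphic. -/
def Iso (G H : FGraph) : Prop := Nonempty (G.graph ≃g H.graph)

/-- The induced subgraph of `G` on a set `s` of vertices. -/
noncomputable def induce (G : FGraph) (s : Set G.V) : FGraph := ⟨↥s, G.graph.induce s⟩

end FGraph

/-- A class of finite graphs. -/
abbrev GProp : Type 1 := FGraph → Prop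

/-- A graph property: a nonempty isomorphism-closed class of finite graphs,
each having at least one vertex. -/
structure IsGProp (P : GProp) : Prop where
  nonempty : ∃ G, P G
  vertexNonempty : ∀ G, P G → Nonempty G.V
  isoClosed : ∀ G H, G.Iso H → P G → P H

namespace GProp

/-- The product `P ∘ Q` of two classes of graphs. -/
def prod (P Q : GProp) : GProp := fun G =>
  Nonempty G.V ∧ ∃ s : Set G.V,
    (s.Nonempty → P (G.induce s)) ∧ ((sᶜ : Set G.V).Nonempty → Q (G.induce (sᶜ : Set G.V)))

/-- The product `∏ i, Ps i` of an indexed family of classes of graphs: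
the vertex set is partitioned into the (possibly empty) preimages of a map
to the index set, and every nonempty part must induce a graph in the
corresponding class. -/
def iProd {I : Type*} (Ps : I → GProp) : GProp := fun G =>
  Nonempty G.V ∧ ∃ f : G.V → I,
    ∀ i, (f ⁻¹' {i}).Nonempty → Ps i (G.induce (f ⁻¹' {i}))

end GProp

/-- Closed under induced subgraphs with at least one vertex. -/
def IndHereditary (P : GProp) : Prop :=
  ∀ G H : FGraph, P G → H.IsInduced G → Nonempty H.V → P H

/-- Closed under subgraphs with at least one vertex. -/
def Hereditary (P : GProp) : Prop :=
  ∀ G H : FGraph, P G → H.IsSub G → Nonempty H.V → P H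

/-- Closed under induced supergraphs. -/
def GeqHereditary (P : GProp) : Prop :=
  ∀ G H : FGraph, P H → H.IsInduced G → P G


/-- `F_⊆(P)`: minimal forbidden subgraphs of `P`, i.e. graphs `H ∉ P` all of
whose proper subgraphs (subgraphs not containing `H` back) are in `P`. -/
def ForbSub (P : GProp) : GProp := fun H =>
  Nonempty H.V ∧ ¬ P H ∧
    ∀ K : FGraph, Nonempty K.V → K.IsSub H → ¬ H.IsSub K → P K

/-- `F_≤(P)`: minimal forbidden induced subgraphs of `P`. -/
def ForbInd (P : GProp) : GProp := fun H =>
  Nonempty H.V ∧ ¬ P H ∧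
    ∀ K : FGraph, Nonempty K.V → K.IsInduced H → ¬ H.IsInduced K → P K

/-- A class of graphs is finite up to isomorphism. -/
def FiniteUpToIso (S : GProp) : Prop :=
  ∃ (n : ℕ) (f : Fin n → FGraph), ∀ H, S H → ∃ i, H.Iso (f i)

/-- A `⊆`-antichain: no member is isomorphic to a subgraph of another
(non-isomorphic) member. -/
def SubAntichain (S : GProp) : Prop :=
  ∀ G H, S G → S H → G.IsSub H → G.Iso H

/-!
A minimal forbidden induced subgraph `G` of a hereditary `P` is "spanned" by every non-member of
`P` it contains: if `H ⊆ G` with `H ∉ P`, the vertices hit by `H` induce a graph outside `P`, so by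
minimality they are all of `G`, and `|G| ≤ |H|`. Every member of `F_≤(P)` contains some member of
`F_⊆(P)` (which is always contained in `F_≤(P)`), so the orders in `F_≤(P)` are bounded by those
in `F_⊆(P)`; finitely many isomorphism classes is the same as bounded order. A `⊆`-antichain
`F_≤(P)` cannot contain a graph properly containing a member of `F_⊆(P)`, which forces equality;
and a subgraph relation inside `F_≤(P)` always joins two graphs of the same order.
-/

namespace SimpleGraph.Hom

variable {V W : Type*} [Fintype W] {G : SimpleGraph V} {H : SimpleGraph W}

lemma card_edgeSet_le (f : G →g H) (hf : Function.Injective f) :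
    Nat.card G.edgeSet ≤ Nat.card H.edgeSet :=
  Nat.card_le_card_of_injective f.mapEdgeSet (mapEdgeSet.injective f hf)

/-- Equal edge counts make `f` bijective on edges, so it reflects adjacency. -/
lemma nonempty_iso_of_card_eq [Fintype V] (f : G →g H) (hf : Function.Injective f)
    (hV : Fintype.card V = Fintype.card W) (hE : Nat.card G.edgeSet = Nat.card H.edgeSet) :
    Nonempty (G ≃g H) := by
  have hbij : Function.Bijective f := (Fintype.bijective_iff_injective_and_card f).mpr ⟨hf, hV⟩
  have hEsurj : Function.Surjective f.mapEdgeSet :=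
    ((Nat.bijective_iff_injective_and_card _).mpr ⟨mapEdgeSet.injective f hf, hE⟩).2
  refine ⟨⟨Equiv.ofBijective f hbij, fun {a b} => ⟨fun hab => ?_, f.map_adj⟩⟩⟩
  obtain ⟨⟨e, he⟩, heq⟩ := hEsurj ⟨s(f a, f b), hab⟩
  induction e with
  | _ u v =>
    replace heq : s(f u, f v) = s(f a, f b) := congrArg Subtype.val heq
    rcases Sym2.eq_iff.mp heq with ⟨hu, hv⟩ | ⟨hu, hv⟩
    · rwa [← hf hu, ← hf hv]
    · rw [← hf hu, ← hf hv]; exact he.symm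

end SimpleGraph.Hom

namespace FGraph

lemma IsSub.refl (G : FGraph) : G.IsSub G := ⟨Hom.id, Function.injective_id⟩

lemma IsSub.trans {G H K : FGraph} (hGH : G.IsSub H) (hHK : H.IsSub K) : G.IsSub K :=
  let ⟨f, hf⟩ := hGH; let ⟨g, hg⟩ := hHK; ⟨g.comp f, hg.comp hf⟩

lemma IsSub.card_le {G H : FGraph} (h : G.IsSub H) : Fintype.card G.V ≤ Fintype.card H.V :=
  Fintype.card_le_of_injective _ h.choose_spec

lemma IsInduced.isSub {G H : FGraph} (h : G.IsInduced H) : G.IsSub H :=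
  ⟨h.some.toHom, h.some.injective⟩

lemma IsInduced.card_le {G H : FGraph} (h : G.IsInduced H) :
    Fintype.card G.V ≤ Fintype.card H.V :=
  h.isSub.card_le

lemma Iso.symm {G H : FGraph} (h : G.Iso H) : H.Iso G := ⟨h.some.symm⟩

lemma Iso.isInduced {G H : FGraph} (h : G.Iso H) : G.IsInduced H := ⟨h.some.toEmbedding⟩

lemma Iso.isSub {G H : FGraph} (h : G.Iso H) : G.IsSub H := h.isInduced.isSub

lemma Iso.card_eq {G H : FGraph} (h : G.Iso H) : Fintype.card G.V = Fintype.card H.V :=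
  Fintype.card_congr h.some.toEquiv

lemma iso_of_isSub_of_isSub {G H : FGraph} (hGH : G.IsSub H) (hHG : H.IsSub G) : G.Iso H := by
  obtain ⟨f, hf⟩ := hGH
  obtain ⟨g, hg⟩ := hHG
  exact f.nonempty_iso_of_card_eq hf
    (le_antisymm (Fintype.card_le_of_injective f hf) (Fintype.card_le_of_injective g hg))
    (le_antisymm (f.card_edgeSet_le hf) (g.card_edgeSet_le hg))

noncomputable def size (G : FGraph) : ℕ := Fintype.card G.V + Nat.card G.graph.edgeSet

lemma size_lt_of_isSub {G H : FGraph} (hGH : G.IsSub H) (hHG : ¬ H.IsSub G) :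
    G.size < H.size := by
  obtain ⟨f, hf⟩ := id hGH
  have hV := Fintype.card_le_of_injective f hf
  have hE := f.card_edgeSet_le hf
  have hne : ¬ (Fintype.card G.V = Fintype.card H.V ∧
      Nat.card G.graph.edgeSet = Nat.card H.graph.edgeSet) := fun ⟨hV', hE'⟩ =>
    hHG (Iso.isSub ⟨(f.nonempty_iso_of_card_eq hf hV' hE').some.symm⟩)
  unfold size
  omega

lemma induce_isInduced (G : FGraph) (s : Set G.V) : (G.induce s).IsInduced G :=
  ⟨Embedding.induce s⟩

/-- The witness is the subgraph of `G` induced on the image of `H`. -/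
lemma IsSub.exists_isInduced {H G : FGraph} (h : H.IsSub G) :
    ∃ K : FGraph, H.IsSub K ∧ K.IsInduced G ∧ Fintype.card K.V = Fintype.card H.V := by
  obtain ⟨f, hf⟩ := h
  refine ⟨G.induce (Set.range f), ⟨⟨fun v => ⟨f v, v, rfl⟩, f.map_adj⟩, ?_⟩,
    G.induce_isInduced _, Fintype.card_congr (Equiv.ofInjective f hf).symm⟩
  exact fun a b hab => hf (congrArg Subtype.val hab)

end FGraph

open FGraph

lemma finiteUpToIso_iff_exists_card_le (S : GProp) :
    FiniteUpToIso S ↔ ∃ N, ∀ H, S H → Fintype.card H.V ≤ N := by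
  constructor
  · rintro ⟨n, f, hf⟩
    refine ⟨Finset.univ.sup fun i => Fintype.card (f i).V, fun H hH => ?_⟩
    obtain ⟨i, hi⟩ := hf H hH
    exact hi.card_eq ▸ Finset.le_sup (f := fun i => Fintype.card (f i).V) (Finset.mem_univ i)
  · rintro ⟨N, hN⟩
    let T := (m : Fin (N + 1)) × SimpleGraph (Fin m)
    let mk : T → FGraph := fun t => ⟨Fin t.1, t.2⟩
    let e := Fintype.equivFin T
    refine ⟨Fintype.card T, fun i => mk (e.symm i), fun H hH => ?_⟩
    let eH := Fintype.equivFin H.V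
    let t : T := ⟨⟨Fintype.card H.V, Nat.lt_succ_of_le (hN H hH)⟩, H.graph.map eH.toEmbedding⟩
    refine ⟨e t, ?_⟩
    show H.Iso (mk (e.symm (e t)))
    rw [Equiv.symm_apply_apply]
    exact ⟨Iso.map eH H.graph⟩

lemma FiniteUpToIso.mono {S T : GProp} (hT : FiniteUpToIso T) (hST : ∀ H, S H → T H) :
    FiniteUpToIso S :=
  let ⟨n, f, hf⟩ := hT; ⟨n, f, fun H hH => hf H (hST H hH)⟩

section Forbidden

variable {P : GProp}

lemma exists_forbSub_isSub {G : FGraph} (hG : Nonempty G.V) (hPG : ¬ P G) :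
    ∃ H, ForbSub P H ∧ H.IsSub G := by
  induction hs : G.size using Nat.strong_induction_on generalizing G with
  | _ n ih =>
    by_cases hmin : ∀ K : FGraph, Nonempty K.V → K.IsSub G → ¬ G.IsSub K → P K
    · exact ⟨G, ⟨hG, hPG, hmin⟩, IsSub.refl G⟩
    · push Not at hmin
      obtain ⟨K, hK, hKG, hGK, hPK⟩ := hmin
      obtain ⟨H, hH, hHK⟩ := ih _ (hs ▸ size_lt_of_isSub hKG hGK) hK hPK rfl
      exact ⟨H, hH, hHK.trans hKG⟩

lemma ForbSub.forbInd {H : FGraph} (hH : ForbSub P H) : ForbInd P H := by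
  obtain ⟨hne, hPH, hmin⟩ := hH
  exact ⟨hne, hPH, fun K hK hKH hHK =>
    hmin K hK hKH.isSub fun hHK' => hHK (iso_of_isSub_of_isSub hHK' hKH.isSub).isInduced⟩

lemma subAntichain_forbSub (P : GProp) : SubAntichain (ForbSub P) := by
  intro G H hG hH hGH
  by_contra hiso
  exact hG.2.1 (hH.2.2 G hG.1 hGH fun hHG => hiso (iso_of_isSub_of_isSub hGH hHG))

lemma ForbInd.card_le_of_isSub (hP : Hereditary P) {G H : FGraph} (hG : ForbInd P G)
    (hHG : H.IsSub G) (hH : Nonempty H.V) (hPH : ¬ P H) :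
    Fintype.card G.V ≤ Fintype.card H.V := by
  obtain ⟨K, hHK, hKG, hcard⟩ := hHG.exists_isInduced
  have hK : Nonempty K.V := Fintype.card_pos_iff.mp (hcard ▸ Fintype.card_pos)
  have hPK : ¬ P K := fun hPK => hPH (hP K H hPK hHK hH)
  have hGK : G.IsInduced K := by
    by_contra hGK
    exact hPK (hG.2.2 K hK hKG hGK)
  exact hcard ▸ hGK.card_le

lemma forbSub_eq_forbInd_of_subAntichain (h : SubAntichain (ForbInd P)) :
    ForbSub P = ForbInd P := by
  funext G
  refine propext ⟨ForbSub.forbInd, fun hG => ⟨hG.1, hG.2.1, fun K hK hKG hGK => ?_⟩⟩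
  by_contra hPK
  obtain ⟨H, hH, hHK⟩ := exists_forbSub_isSub hK hPK
  exact hGK ((h H G hH.forbInd hG (hHK.trans hKG)).symm.isSub.trans hHK)

lemma ForbInd.card_eq_of_isSub (hP : Hereditary P) {G H : FGraph} (hG : ForbInd P G)
    (hH : ForbInd P H) (hGH : G.IsSub H) : Fintype.card G.V = Fintype.card H.V :=
  le_antisymm hGH.card_le (hH.card_le_of_isSub hP hGH hG.1 hG.2.1)

end Forbidden

theorem statement_18_general (P : GProp) (hher : Hereditary P) :
    (FiniteUpToIso (ForbSub P) ↔ FiniteUpToIso (ForbInd P)) ∧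
    (ForbSub P = ForbInd P ↔ SubAntichain (ForbInd P)) ∧
    (SubAntichain (ForbInd P) ↔
      ∀ n : ℕ, SubAntichain (fun H => ForbInd P H ∧ Fintype.card H.V = n)) := by
  refine ⟨⟨fun hfin => ?_, fun hfin => hfin.mono fun _ => ForbSub.forbInd⟩,
    ⟨fun heq => heq ▸ subAntichain_forbSub P, forbSub_eq_forbInd_of_subAntichain⟩,
    ⟨fun h _ G H hG hH => h G H hG.1 hH.1, fun h G H hG hH hGH => ?_⟩⟩
  · obtain ⟨N, hN⟩ := (finiteUpToIso_iff_exists_card_le _).mp hfin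
    refine (finiteUpToIso_iff_exists_card_le _).mpr ⟨N, fun G hG => ?_⟩
    obtain ⟨H, hH, hHG⟩ := exists_forbSub_isSub hG.1 hG.2.1
    exact (hG.card_le_of_isSub hher hHG hH.1 hH.2.1).trans (hN H hH)
  · exact h _ G H ⟨hG, rfl⟩ ⟨hH, (hG.card_eq_of_isSub hher hH hGH).symm⟩ hGH

/-- for a hereditary graph property `P`:
(i) `F_⊆(P)` is finite iff `F_≤(P)` is finite; and
(ii) `F_⊆(P) = F_≤(P)` iff `F_≤(P)` is a `⊆`-antichain, iff for each `n` the
set `F_≤(P, n)` of its members on `n` vertices is a `⊆`-antichain. -/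
theorem statement_18 (P : GProp) (hP : IsGProp P) (hher : Hereditary P) :
    (FiniteUpToIso (ForbSub P) ↔ FiniteUpToIso (ForbInd P)) ∧
    (ForbSub P = ForbInd P ↔ SubAntichain (ForbInd P)) ∧
    (SubAntichain (ForbInd P) ↔
      ∀ n : ℕ, SubAntichain (fun H => ForbInd P H ∧ Fintype.card H.V = n)) :=
  statement_18_general P hher
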